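/- Let $k \ge 1$, $m \ge 1$ be integers and let $Q \subset \mathbb{Z}^k$ be the set of integer points in $[0,m]^k$. Let $A = (A_{ij})$ be the $|Q| \times |Q|$ matrix indexed by points $X^i \in Q$ with $A_{ii} = 0$ and $A_{ij} = |X^i - X^j|^{-(n-2)}$ for $i \neq j$, where $n-2 > 2k$. Suppose $c > 0$ and $p > 2$ and $\bar{b} = (\bar{b}_1, \ldots, \bar{b}_{|Q|})$ is a vector with positive entries satisfying $\sum_{j \neq i} A_{ij}\bar{b}_j = c\, \bar{b}_i^{p-1}$ for all $i$. Then there exist constants $0 < C_5 < C_6 < \infty$ depending only on $n$, $k$, $c$, $p$ (in particular independent of $m$) such that $C_5 \le \bar{b}_i \le C_6$ for all $i$. -/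

import Mathlib

/-!
Maximum principle. At a point where `b` is maximal,
`c b^(p-1) = ∑ A b ≤ (∑ A) b ≤ R b`, where `R` bounds the row sums of `A` uniformly in `m`:
the points `X^j - X^i` are distinct points of `ℤ^k`, so a row sum is at most
`∑_{z ∈ ℤ^k} |z|^-(n-2)`, which converges since `n - 2 > k`. At a point where `b` is minimal,
a nearest neighbour `X^j` has `A_ij = 1`, so `c b^(p-1) ≥ b_j ≥ b`. Since `p > 2`, these give
`b^(p-2) ≤ R / c` and `b^(p-2) ≥ 1 / c`.
-/

open Real

/-- The lattice point of `ℝ^k` associated to `q : Fin k → Fin (m+1)`. -/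
noncomputable def latPt {k m : ℕ} (q : Fin k → Fin (m + 1)) : EuclideanSpace ℝ (Fin k) :=
  WithLp.toLp 2 (fun i => ((q i : ℕ) : ℝ))

open Finset Submodule

lemma rpow_sub_one_eq_rpow_sub_two_mul {x : ℝ} (hx : 0 < x) (p : ℝ) :
    x ^ (p - 1) = x ^ (p - 2) * x := by
  rw [← rpow_add_one hx.ne']
  ring_nf

lemma le_rpow_inv_of_mul_rpow_le {x c R p : ℝ} (hx : 0 < x) (hc : 0 < c) (hp : 2 < p)
    (h : c * x ^ (p - 1) ≤ R * x) : x ≤ (R / c) ^ (p - 2)⁻¹ := by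
  rw [rpow_sub_one_eq_rpow_sub_two_mul hx, ← mul_assoc] at h
  have h' : x ^ (p - 2) ≤ R / c := by
    rw [le_div_iff₀ hc, mul_comm]
    exact le_of_mul_le_mul_right h hx
  exact (le_rpow_inv_iff_of_pos hx.le ((rpow_nonneg hx.le _).trans h') (by linarith)).mpr h'

lemma rpow_inv_le_of_le_mul_rpow {x c p : ℝ} (hx : 0 < x) (hc : 0 < c) (hp : 2 < p)
    (h : x ≤ c * x ^ (p - 1)) : c⁻¹ ^ (p - 2)⁻¹ ≤ x := by
  rw [rpow_sub_one_eq_rpow_sub_two_mul hx, ← mul_assoc] at h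
  have h' : c⁻¹ ≤ x ^ (p - 2) := by
    rw [inv_le_iff_one_le_mul₀' hc]
    exact le_of_mul_le_mul_right (by simpa using h) hx
  exact (rpow_inv_le_iff_of_pos (by positivity) hx.le (by linarith)).mpr h'

section MaximumPrinciple

variable {ι : Type*} [Fintype ι] {A : ι → ι → ℝ} {b : ι → ℝ} {c p : ℝ}

lemma upper_bound_of_rowSum_le (hA : ∀ i j, 0 ≤ A i j) (hb : ∀ i, 0 < b i) (hc : 0 < c)
    (hp : 2 < p) (hsol : ∀ i, ∑ j, A i j * b j = c * b i ^ (p - 1)) {R : ℝ}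
    (hR : ∀ i, ∑ j, A i j ≤ R) (i : ι) : b i ≤ (R / c) ^ (p - 2)⁻¹ := by
  have : Nonempty ι := ⟨i⟩
  obtain ⟨i₀, hi₀⟩ := Finite.exists_max b
  refine (hi₀ i).trans (le_rpow_inv_of_mul_rpow_le (hb i₀) hc hp ?_)
  calc c * b i₀ ^ (p - 1)
      = ∑ j, A i₀ j * b j := (hsol i₀).symm
    _ ≤ ∑ j, A i₀ j * b i₀ := sum_le_sum fun j _ => mul_le_mul_of_nonneg_left (hi₀ j) (hA i₀ j)
    _ = (∑ j, A i₀ j) * b i₀ := (sum_mul ..).symm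
    _ ≤ R * b i₀ := mul_le_mul_of_nonneg_right (hR i₀) (hb i₀).le

lemma lower_bound_of_one_le_entry (hA : ∀ i j, 0 ≤ A i j) (hb : ∀ i, 0 < b i) (hc : 0 < c)
    (hp : 2 < p) (hsol : ∀ i, ∑ j, A i j * b j = c * b i ^ (p - 1))
    (hnbr : ∀ i, ∃ j, 1 ≤ A i j) (i : ι) : c⁻¹ ^ (p - 2)⁻¹ ≤ b i := by
  have : Nonempty ι := ⟨i⟩
  obtain ⟨i₁, hi₁⟩ := Finite.exists_min b
  obtain ⟨j, hj⟩ := hnbr i₁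
  refine (rpow_inv_le_of_le_mul_rpow (hb i₁) hc hp ?_).trans (hi₁ i)
  calc b i₁
      ≤ A i₁ j * b j := (hi₁ j).trans (le_mul_of_one_le_left (hb j).le hj)
    _ ≤ ∑ j', A i₁ j' * b j' :=
        single_le_sum (f := fun j' => A i₁ j' * b j') (fun j' _ => mul_nonneg (hA i₁ j') (hb j').le)
          (mem_univ j)
    _ = c * b i₁ ^ (p - 1) := hsol i₁

end MaximumPrinciple

abbrev intLattice (k : ℕ) : Submodule ℤ (EuclideanSpace ℝ (Fin k)) :=
  span ℤ (Set.range (EuclideanSpace.basisFun (Fin k) ℝ).toBasis)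

lemma finrank_intLattice (k : ℕ) : Module.finrank ℤ (intLattice k) = k := by
  rw [ZLattice.rank ℝ, finrank_euclideanSpace_fin]

lemma latPt_sub_mem_intLattice {k m : ℕ} (q q' : Fin k → Fin (m + 1)) :
    latPt q' - latPt q ∈ intLattice k := by
  rw [Module.Basis.mem_span_iff_repr_mem]
  exact fun i => ⟨((q' i : ℕ) : ℤ) - ((q i : ℕ) : ℤ), by simp [latPt]⟩

lemma latPt_injective {k m : ℕ} : Function.Injective (latPt (k := k) (m := m)) := by
  intro q q' h
  funext i
  exact Fin.ext (by simpa [latPt] using congrArg (· i) h)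

lemma sum_one_div_dist_latPt_rpow_le {k m : ℕ} {s : ℝ} (hs : k < s) (q : Fin k → Fin (m + 1)) :
    ∑ q' : Fin k → Fin (m + 1), 1 / dist (latPt q) (latPt q') ^ s ≤
      ∑' z : intLattice k, ‖z‖ ^ (-s) := by
  let toLattice (q' : Fin k → Fin (m + 1)) : intLattice k :=
    ⟨latPt q' - latPt q, latPt_sub_mem_intLattice q q'⟩
  have h_inj : Function.Injective toLattice := fun q₁ q₂ h =>
    latPt_injective (sub_left_injective (congrArg Subtype.val h))
  have h_summable : Summable fun z : intLattice k => ‖z‖ ^ (-s) :=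
    ZLattice.summable_norm_rpow _ _ (by rw [finrank_intLattice]; linarith)
  calc ∑ q', 1 / dist (latPt q) (latPt q') ^ s
      = ∑' q', ‖toLattice q'‖ ^ (-s) := by
        rw [tsum_fintype]
        refine sum_congr rfl fun q' _ => ?_
        rw [rpow_neg (norm_nonneg _), one_div, dist_comm, dist_eq_norm]
        rfl
    _ ≤ ∑' z : intLattice k, ‖z‖ ^ (-s) :=
        tsum_comp_le_tsum_of_inj h_summable (fun _ => by positivity) h_inj

lemma exists_dist_latPt_eq_one {k m : ℕ} (hk : 1 ≤ k) (hm : 1 ≤ m) (q : Fin k → Fin (m + 1)) :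
    ∃ q' : Fin k → Fin (m + 1), dist (latPt q) (latPt q') = 1 := by
  let i : Fin k := ⟨0, hk⟩
  obtain ⟨j, hj⟩ : ∃ j : Fin (m + 1), |((q i : ℕ) : ℝ) - (j : ℕ)| = 1 := by
    rcases Nat.lt_or_ge (q i : ℕ) m with h | h
    · exact ⟨⟨q i + 1, by omega⟩, by simp⟩
    · exact ⟨⟨q i - 1, by omega⟩, by simp [Nat.cast_sub (show 1 ≤ (q i : ℕ) by omega)]⟩
  refine ⟨Function.update q i j, ?_⟩
  rw [EuclideanSpace.dist_eq, sum_eq_single i, sqrt_sq_eq_abs, abs_of_nonneg dist_nonneg]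
  · simpa [latPt, Real.dist_eq] using hj
  · intro l _ hl
    simp [latPt, Function.update_of_ne hl]
  · simp

theorem stmt_9 {n k : ℕ} (hk : 1 ≤ k) (hnk : 2 * k + 2 < n)
    (c p : ℝ) (hc : 0 < c) (hp : 2 < p) :
    ∃ C₅ C₆ : ℝ, 0 < C₅ ∧ C₅ < C₆ ∧
      ∀ m : ℕ, 1 ≤ m → ∀ b : (Fin k → Fin (m + 1)) → ℝ,
        (∀ q, 0 < b q) →
        (∀ q, (∑ q' ∈ Finset.univ.filter (fun q' => q' ≠ q),
            (1 / dist (latPt q) (latPt q') ^ ((n : ℝ) - 2)) * b q') = c * b q ^ (p - 1)) →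
        ∀ q, C₅ ≤ b q ∧ b q ≤ C₆ := by
  have hs : (k : ℝ) < n - 2 := by
    rw [lt_sub_iff_add_lt]
    exact_mod_cast (by omega : k + 2 < n)
  set C := ∑' z : intLattice k, ‖z‖ ^ (-((n : ℝ) - 2))
  set C₅ := c⁻¹ ^ (p - 2)⁻¹
  refine ⟨C₅, max C₅ ((C / c) ^ (p - 2)⁻¹) + 1, by positivity,
    (le_max_left _ _).trans_lt (lt_add_one _), fun m hm b hb hsol q => ?_⟩
  set A := fun q q' : Fin k → Fin (m + 1) => 1 / dist (latPt q) (latPt q') ^ ((n : ℝ) - 2)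
  have hA : ∀ q q', 0 ≤ A q q' := fun _ _ => by positivity
  -- The diagonal term is `1 / 0 ^ (n - 2) = 0`, so the excluded term may be added back.
  have hsol' : ∀ q, ∑ q', A q q' * b q' = c * b q ^ (p - 1) := fun q => by
    rw [← hsol q, sum_filter_of_ne]
    rintro q' - hne rfl
    simp [zero_rpow (show (n : ℝ) - 2 ≠ 0 by linarith)] at hne
  refine ⟨lower_bound_of_one_le_entry hA hb hc hp hsol' (fun q => ?_) q,
    ((upper_bound_of_rowSum_le hA hb hc hp hsol' (sum_one_div_dist_latPt_rpow_le hs) q).trans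
      (le_max_right _ _)).trans (lt_add_one _).le⟩
  obtain ⟨q', hq'⟩ := exists_dist_latPt_eq_one hk hm q
  exact ⟨q', by simp [A, hq']⟩
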